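/- arXiv:2009.08004 — 4 statements merged into one kernel-verified Lean document; each statement's English description precedes it below -/
import Mathlib

section
/- Let m ≥ 1 and let A be an m×m complex matrix with eigenvalues λ₁,…,λ_m (counted with multiplicity). There exists a constant C > 0, depending only on m and A, such that for every m×m complex matrix B with ‖B − A‖ ≤ 1, if μ₁,…,μ_m are the eigenvalues of B (counted with multiplicity), then there exists a permutation π of {1,…,m} with √(∑_{j=1}^m |μ_{π(j)} − λ_j|²) ≤ C·‖B − A‖^{1/m}. -/
/-!
Near `A`, `|χ_A(z) - χ_B(z)| ≤ K ‖B - A‖` for bounded `z` (Leibniz expansion of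
`det (z - A)`), so every eigenvalue `μ` of `B` satisfies `∏ⱼ |μ - λⱼ| ≤ K ‖B - A‖` and lies
within `(K ‖B - A‖)^{1/m}` of some `λₖ`. By compactness, the eigenvalues of `B` close to `A`
can be matched with those of `A` to within half the minimal gap `g` between distinct `λ`'s;
once also `(K ‖B - A‖)^{1/m} < g / 2`, the `λₖ` near `μ_{π j}` must equal `λⱼ`. Away from
`A` the bound is trivial, all eigenvalues being bounded by `‖A‖ + 1`.
-/

open scoped Matrix.Norms.L2Operator

noncomputable section

/-- The multiset of eigenvalues (roots of the characteristic polynomial, with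
multiplicity) of `A` is `{λ_j : 1 ≤ j ≤ m}`. -/
def EigListing {m : ℕ} (A : Matrix (Fin m) (Fin m) ℂ) (lam : Fin m → ℂ) : Prop :=
  A.charpoly.roots = Multiset.map lam Finset.univ.val

open Polynomial Matrix Filter Topology

lemma Matrix.norm_apply_le_l2_opNorm {m n 𝕜 : Type*} [Fintype m] [Fintype n] [DecidableEq n]
    [RCLike 𝕜] (M : Matrix m n 𝕜) (i : m) (j : n) : ‖M i j‖ ≤ ‖M‖ :=
  calc ‖M i j‖ = ‖(EuclideanSpace.equiv m 𝕜).symm (M *ᵥ EuclideanSpace.single j 1) i‖ := by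
        simp
    _ ≤ ‖(EuclideanSpace.equiv m 𝕜).symm (M *ᵥ EuclideanSpace.single j 1)‖ := PiLp.norm_apply_le _ i
    _ ≤ ‖M‖ * ‖EuclideanSpace.single j (1 : 𝕜)‖ := l2_opNorm_mulVec M _
    _ = ‖M‖ := by simp

lemma Matrix.norm_le_l2_opNorm_of_isRoot_charpoly {n 𝕜 : Type*} [Fintype n] [DecidableEq n]
    [RCLike 𝕜] {M : Matrix n n 𝕜} {z : 𝕜} (hz : M.charpoly.IsRoot z) : ‖z‖ ≤ ‖M‖ := by
  have h1 : ‖(1 : Matrix n n 𝕜)‖ ≤ 1 := by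
    rw [← diagonal_one, l2_opNorm_diagonal]; exact pi_norm_const_le 1 |>.trans norm_one.le
  calc ‖z‖ ≤ ‖M‖ * ‖(1 : Matrix n n 𝕜)‖ :=
        spectrum.norm_le_norm_mul_of_mem (mem_spectrum_iff_isRoot_charpoly.2 hz)
    _ ≤ ‖M‖ := mul_le_of_le_one_right (norm_nonneg _) h1

lemma Finset.norm_prod_sub_prod_le {ι R : Type*} [NormedCommRing R] [NormOneClass R] (s : Finset ι)
    {x y : ι → R} {E e : ℝ} (hE : 1 ≤ E) (hx : ∀ i ∈ s, ‖x i‖ ≤ E) (hy : ∀ i ∈ s, ‖y i‖ ≤ E)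
    (hxy : ∀ i ∈ s, ‖x i - y i‖ ≤ e) :
    ‖∏ i ∈ s, x i - ∏ i ∈ s, y i‖ ≤ s.card * E ^ s.card * e := by
  classical
  induction s using Finset.induction_on with
  | empty => simp
  | @insert a s ha ih =>
    simp only [Finset.forall_mem_insert] at hx hy hxy
    have hprod : ‖∏ i ∈ s, y i‖ ≤ E ^ s.card :=
      (Finset.norm_prod_le _ _).trans <| (Finset.prod_le_prod (fun _ _ => norm_nonneg _) hy.2).trans
        (Finset.prod_const E).le
    have he : 0 ≤ e := (norm_nonneg _).trans hxy.1
    rw [Finset.prod_insert ha, Finset.prod_insert ha, Finset.card_insert_of_notMem ha,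
      show x a * ∏ i ∈ s, x i - y a * ∏ i ∈ s, y i
        = x a * (∏ i ∈ s, x i - ∏ i ∈ s, y i) + (x a - y a) * ∏ i ∈ s, y i by ring]
    calc _ ≤ ‖x a‖ * ‖∏ i ∈ s, x i - ∏ i ∈ s, y i‖ + ‖x a - y a‖ * ‖∏ i ∈ s, y i‖ :=
          (norm_add_le _ _).trans (add_le_add (norm_mul_le _ _) (norm_mul_le _ _))
      _ ≤ E * (s.card * E ^ s.card * e) + e * E ^ s.card :=
          add_le_add (mul_le_mul hx.1 (ih hx.2 hy.2 hxy.2) (norm_nonneg _) (by linarith))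
            (mul_le_mul hxy.1 hprod (norm_nonneg _) he)
      _ ≤ (s.card + 1 : ℕ) * E ^ (s.card + 1) * e := by
          have := mul_nonneg (mul_nonneg he (pow_nonneg (zero_le_one.trans hE) s.card))
            (sub_nonneg.2 hE)
          push_cast
          rw [pow_succ]
          nlinarith

lemma Matrix.norm_det_sub_det_le {n R : Type*} [Fintype n] [DecidableEq n] [NormedCommRing R]
    [NormOneClass R] {M N : Matrix n n R} {E e : ℝ} (hE : 1 ≤ E) (hM : ∀ i j, ‖M i j‖ ≤ E)
    (hN : ∀ i j, ‖N i j‖ ≤ E) (hMN : ∀ i j, ‖M i j - N i j‖ ≤ e) :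
    ‖M.det - N.det‖ ≤ (Fintype.card n).factorial * Fintype.card n * E ^ Fintype.card n * e := by
  rw [det_apply, det_apply, ← Finset.sum_sub_distrib]
  have hterm (σ : Equiv.Perm n) :
      ‖σ.sign • ∏ i, M (σ i) i - σ.sign • ∏ i, N (σ i) i‖
        ≤ Fintype.card n * E ^ Fintype.card n * e := by
    rw [← smul_sub, norm_units_zsmul]
    exact Finset.norm_prod_sub_prod_le _ hE (fun _ _ => hM _ _) (fun _ _ => hN _ _)
      (fun _ _ => hMN _ _)
  calc _ ≤ ∑ σ : Equiv.Perm n, (Fintype.card n * E ^ Fintype.card n * e) :=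
        (norm_sum_le _ _).trans (Finset.sum_le_sum fun σ _ => hterm σ)
    _ = _ := by simp [Fintype.card_perm, mul_assoc]

lemma Matrix.norm_eval_charpoly_sub_le {n 𝕜 : Type*} [Fintype n] [DecidableEq n] [RCLike 𝕜]
    {A B : Matrix n n 𝕜} {R : ℝ} {z : 𝕜} (hA : ‖A‖ ≤ R) (hB : ‖B‖ ≤ R) (hz : ‖z‖ ≤ R) :
    ‖A.charpoly.eval z - B.charpoly.eval z‖
      ≤ (Fintype.card n).factorial * Fintype.card n * (2 * R + 1) ^ Fintype.card n * ‖B - A‖ := by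
  have hR : 0 ≤ R := (norm_nonneg z).trans hz
  have hentry {M : Matrix n n 𝕜} (hM : ‖M‖ ≤ R) (i j : n) : ‖(scalar n z - M) i j‖ ≤ 2 * R + 1 :=
    calc ‖(scalar n z - M) i j‖ ≤ ‖scalar n z‖ + ‖M‖ :=
          (norm_apply_le_l2_opNorm _ i j).trans (norm_sub_le _ _)
      _ ≤ ‖z‖ + ‖M‖ := by
          gcongr
          rw [scalar_apply, l2_opNorm_diagonal]
          exact pi_norm_const_le z
      _ ≤ 2 * R + 1 := by linarith
  rw [eval_charpoly, eval_charpoly]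
  refine norm_det_sub_det_le (by linarith) (hentry hA) (hentry hB) fun i j => ?_
  simpa using norm_apply_le_l2_opNorm (B - A) i j

lemma exists_perm_apply_eq_of_map_univ_eq {ι α : Type*} [Fintype ι] {f g : ι → α}
    (h : Finset.univ.val.map f = Finset.univ.val.map g) :
    ∃ σ : Equiv.Perm ι, ∀ i, f (σ i) = g i := by
  classical
  have hfib (c : α) : Fintype.card {i // g i = c} = Fintype.card {i // f i = c} := by
    have := congrArg (Multiset.count c) h
    rw [Multiset.count_map, Multiset.count_map] at this
    simpa [Fintype.card_subtype, Finset.card, Finset.filter_val, eq_comm] using this.symm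
  exact ⟨Equiv.ofFiberEquiv fun c => Fintype.equivOfCardEq (hfib c), Equiv.ofFiberEquiv_map _⟩

lemma exists_pos_forall_dist_lt_imp_eq {ι α : Type*} [Fintype ι] [MetricSpace α] (f : ι → α) :
    ∃ g > 0, ∀ i j, dist (f i) (f j) < g → f i = f j := by
  classical
  let S := (Finset.univ.filter fun p : ι × ι => f p.1 ≠ f p.2).image fun p => dist (f p.1) (f p.2)
  refine ⟨(insert 1 S).min' (Finset.insert_nonempty _ _), ?_, fun i j h => ?_⟩
  · simp only [S, Finset.lt_min'_iff, Finset.mem_insert, Finset.mem_image, Finset.mem_filter]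
    rintro _ (rfl | ⟨p, ⟨-, hne⟩, rfl⟩)
    exacts [one_pos, dist_pos.2 hne]
  · by_contra hne
    exact (Finset.min'_le _ _ (by simp [S]; exact Or.inr ⟨i, j, hne, rfl⟩)).not_gt h

lemma exists_norm_sub_le_rpow_of_norm_prod_le {ι 𝕜 : Type*} [Fintype ι] [Nonempty ι] [NormedField 𝕜]
    (lam : ι → 𝕜) {z : 𝕜} {t : ℝ} (h : ‖∏ j, (z - lam j)‖ ≤ t) :
    ∃ j, ‖z - lam j‖ ≤ t ^ ((1 : ℝ) / Fintype.card ι) := by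
  obtain ⟨j, -, hj⟩ := Finset.exists_min_image Finset.univ (fun j => ‖z - lam j‖)
    (Finset.univ_nonempty (α := ι))
  refine ⟨j, ?_⟩
  have hpow : ‖z - lam j‖ ^ Fintype.card ι ≤ t :=
    calc ‖z - lam j‖ ^ Fintype.card ι = ∏ _k : ι, ‖z - lam j‖ := by simp
      _ ≤ ∏ k, ‖z - lam k‖ :=
          Finset.prod_le_prod (fun _ _ => norm_nonneg _) fun k _ => hj k (Finset.mem_univ k)
      _ = ‖∏ k, (z - lam k)‖ := (norm_prod _ _).symm
      _ ≤ t := h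
  rw [one_div, ← Real.pow_rpow_inv_natCast (norm_nonneg (z - lam j))
    (Fintype.card_ne_zero (α := ι))]
  exact Real.rpow_le_rpow (by positivity) hpow (by positivity)

lemma sqrt_sum_sq_le_of_forall_le {ι E : Type*} [Fintype ι] [SeminormedAddCommGroup E]
    {f : ι → E} {c : ℝ} (hc : 0 ≤ c) (h : ∀ i, ‖f i‖ ≤ c) :
    √(∑ i, ‖f i‖ ^ 2) ≤ √(Fintype.card ι) * c :=
  calc √(∑ i, ‖f i‖ ^ 2) ≤ √(∑ _i : ι, c ^ 2) := Real.sqrt_le_sqrt <| Finset.sum_le_sum fun i _ =>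
        pow_le_pow_left₀ (norm_nonneg _) (h i) 2
    _ = √(Fintype.card ι) * c := by simp [Real.sqrt_mul, Real.sqrt_sq hc]

namespace EigListing

variable {m : ℕ} {A : Matrix (Fin m) (Fin m) ℂ} {lam : Fin m → ℂ}

lemma charpoly_eq_prod (h : EigListing A lam) : A.charpoly = ∏ j, (X - C (lam j)) := by
  unfold EigListing at h
  have hcard : A.charpoly.roots.card = A.charpoly.natDegree := by
    simp [h, charpoly_natDegree_eq_dim]
  rw [← prod_multiset_X_sub_C_of_monic_of_roots_card_eq (charpoly_monic A) hcard, h,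
    Multiset.map_map, Finset.prod_eq_multiset_prod]
  rfl

lemma eval_charpoly (h : EigListing A lam) (z : ℂ) : A.charpoly.eval z = ∏ j, (z - lam j) := by
  simp [h.charpoly_eq_prod, eval_prod]

lemma isRoot (h : EigListing A lam) (j : Fin m) : A.charpoly.IsRoot (lam j) :=
  isRoot_of_mem_roots (by rw [h]; exact Multiset.mem_map_of_mem _ (Finset.mem_univ j))

lemma norm_le (h : EigListing A lam) (j : Fin m) : ‖lam j‖ ≤ ‖A‖ :=
  norm_le_l2_opNorm_of_isRoot_charpoly (h.isRoot j)

lemma of_eval_charpoly {ν : Fin m → ℂ} (h : ∀ z, A.charpoly.eval z = ∏ j, (z - ν j)) :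
    EigListing A ν := by
  have hA : A.charpoly = ∏ j, (X - C (ν j)) := Polynomial.funext fun z => by simp [h, eval_prod]
  rw [EigListing, hA, Finset.prod_eq_multiset_prod]
  exact (congrArg _ (congrArg _ (Multiset.map_map (fun a => X - C a) ν _).symm)).trans
    (roots_multiset_prod_X_sub_C _)

lemma exists_perm {ν : Fin m → ℂ} (hν : EigListing A ν) (hlam : EigListing A lam) :
    ∃ σ : Equiv.Perm (Fin m), ∀ j, ν (σ j) = lam j :=
  exists_perm_apply_eq_of_map_univ_eq (hν.symm.trans hlam)

lemma eventually_exists_perm_norm_sub_lt (hlam : EigListing A lam) {ε : ℝ} (hε : 0 < ε) :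
    ∀ᶠ B in 𝓝 A, ∀ μ, EigListing B μ → ∃ π : Equiv.Perm (Fin m), ∀ j, ‖μ (π j) - lam j‖ < ε := by
  by_contra hcon
  obtain ⟨B, hB, hbad⟩ := frequently_iff_seq_forall.1 (not_eventually.1 hcon)
  push Not at hbad
  choose μ hμ hbad using hbad
  obtain ⟨R, hR⟩ := (Metric.isBounded_range_of_tendsto B hB).exists_norm_le
  have hμR (n : ℕ) : μ n ∈ Metric.closedBall (0 : Fin m → ℂ) R := by
    rw [mem_closedBall_zero_iff, pi_norm_le_iff_of_nonneg ((norm_nonneg _).trans (hR _ ⟨0, rfl⟩))]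
    exact fun j => ((hμ n).norm_le j).trans (hR _ ⟨n, rfl⟩)
  obtain ⟨ν, -, φ, hφ, hν⟩ := (isCompact_closedBall _ _).tendsto_subseq hμR
  have hνA : EigListing A ν := of_eval_charpoly fun z => by
    have hcont : Continuous fun M : Matrix (Fin m) (Fin m) ℂ => M.charpoly.eval z := by
      simp only [Matrix.eval_charpoly]; fun_prop
    refine tendsto_nhds_unique ((hcont.tendsto A).comp (hB.comp hφ.tendsto_atTop)) ?_
    simp only [Function.comp_def, (hμ _).eval_charpoly]
    exact tendsto_finsetProd _ fun j _ =>
      tendsto_const_nhds.sub ((continuous_apply j).tendsto ν |>.comp hν)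
  obtain ⟨σ, hσ⟩ := hνA.exists_perm hlam
  obtain ⟨n, hn⟩ := (hν.eventually (Metric.ball_mem_nhds ν hε)).exists
  obtain ⟨j, hj⟩ := hbad (φ n) σ
  have := (dist_le_pi_dist _ _ (σ j)).trans_lt hn
  rw [dist_eq_norm, hσ] at this
  exact hj.not_gt this

lemma exists_norm_sub_le_rpow_of_isRoot [NeZero m] (hlam : EigListing A lam) :
    ∃ K > 0, ∀ B : Matrix (Fin m) (Fin m) ℂ, ‖B - A‖ ≤ 1 → ∀ z, B.charpoly.IsRoot z →
      ∃ k, ‖z - lam k‖ ≤ (K * ‖B - A‖) ^ ((1 : ℝ) / m) := by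
  have hm : (0 : ℝ) < m := by exact_mod_cast Nat.pos_of_neZero m
  refine ⟨m.factorial * m * (2 * (‖A‖ + 1) + 1) ^ m, by positivity, fun B hB z hz => ?_⟩
  have hBR : ‖B‖ ≤ ‖A‖ + 1 := by linarith [norm_le_norm_add_norm_sub' B A]
  have hA := Matrix.norm_eval_charpoly_sub_le (le_add_of_nonneg_right zero_le_one) hBR
    ((norm_le_l2_opNorm_of_isRoot_charpoly hz).trans hBR)
  rw [hz.eq_zero, sub_zero, hlam.eval_charpoly, Fintype.card_fin] at hA
  simpa using exists_norm_sub_le_rpow_of_norm_prod_le lam hA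

lemma eventually_exists_perm_norm_sub_le_rpow [NeZero m] (hlam : EigListing A lam) :
    ∃ c, ∀ᶠ B in 𝓝 A, ∀ μ, EigListing B μ →
      ∃ π : Equiv.Perm (Fin m), ∀ j, ‖μ (π j) - lam j‖ ≤ c * ‖B - A‖ ^ ((1 : ℝ) / m) := by
  obtain ⟨g, hg, hgap⟩ := exists_pos_forall_dist_lt_imp_eq lam
  obtain ⟨K, hK, hclose⟩ := hlam.exists_norm_sub_le_rpow_of_isRoot
  refine ⟨K ^ ((1 : ℝ) / m), ?_⟩
  filter_upwards [hlam.eventually_exists_perm_norm_sub_lt (half_pos hg),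
    Metric.ball_mem_nhds A (lt_min one_pos (by positivity : 0 < (g / 2) ^ m / K))]
    with B hmatch hB μ hμ
  rw [Metric.mem_ball, dist_eq_norm, lt_min_iff, lt_div_iff₀' hK] at hB
  obtain ⟨π, hπ⟩ := hmatch μ hμ
  refine ⟨π, fun j => ?_⟩
  obtain ⟨k, hk⟩ := hclose B hB.1.le _ (hμ.isRoot (π j))
  have hsmall : (K * ‖B - A‖) ^ ((1 : ℝ) / m) < g / 2 := by
    rw [one_div, ← Real.pow_rpow_inv_natCast (half_pos hg).le (NeZero.ne m) (x := g / 2)]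
    exact Real.rpow_lt_rpow (by positivity) hB.2 (inv_pos.2 (Nat.cast_pos.2 (Nat.pos_of_neZero m)))
  have hkj : lam k = lam j := hgap k j <| by
    rw [dist_eq_norm]
    linarith [norm_sub_le_norm_sub_add_norm_sub (lam k) (μ (π j)) (lam j),
      norm_sub_rev (lam k) (μ (π j)), hπ j]
  rwa [← Real.mul_rpow hK.le (norm_nonneg _), ← hkj]

end EigListing

/-- **Eigenvalue perturbation (Proposition 2.3 of Ge–You–Zhao)**: for an `m×m` complex
matrix `A` with eigenvalues `λ₁,…,λ_m`, there is `C > 0` depending only on `m` and `A`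
such that for every `B` with `‖B − A‖ ≤ 1` and eigenvalues `μ₁,…,μ_m`, some permutation
`π` satisfies `√(∑ |μ_{π(j)} − λ_j|²) ≤ C‖B − A‖^{1/m}`.  Here `‖·‖` is the operator
norm on matrices acting on `ℂ^m` with the Euclidean norm. -/
theorem eigenvalue_perturbation
    (m : ℕ) (hm : 1 ≤ m) (A : Matrix (Fin m) (Fin m) ℂ)
    (lam : Fin m → ℂ) (hlam : EigListing A lam) :
    ∃ C : ℝ, 0 < C ∧
      ∀ B : Matrix (Fin m) (Fin m) ℂ, ‖B - A‖ ≤ 1 →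
        ∀ μ : Fin m → ℂ, EigListing B μ →
          ∃ π : Equiv.Perm (Fin m),
            Real.sqrt (∑ j, ‖μ (π j) - lam j‖ ^ 2) ≤
              C * ‖B - A‖ ^ ((1 : ℝ) / m) := by
  have : NeZero m := ⟨by omega⟩
  obtain ⟨c, hnear⟩ := hlam.eventually_exists_perm_norm_sub_le_rpow
  obtain ⟨δ, hδ, hnear⟩ := Metric.eventually_nhds_iff.1 hnear
  set c' := max c ((2 * ‖A‖ + 1) / δ ^ ((1 : ℝ) / m))
  have hc' : 0 < c' := lt_max_of_lt_right (by positivity)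
  refine ⟨√m * c', by positivity, fun B hB μ hμ => ?_⟩
  obtain ⟨π, hπ⟩ : ∃ π : Equiv.Perm (Fin m),
      ∀ j, ‖μ (π j) - lam j‖ ≤ c' * ‖B - A‖ ^ ((1 : ℝ) / m) := by
    rcases lt_or_ge ‖B - A‖ δ with hBδ | hBδ
    · obtain ⟨π, hπ⟩ := hnear (by rwa [dist_eq_norm]) μ hμ
      exact ⟨π, fun j => (hπ j).trans (by gcongr; exact le_max_left _ _)⟩
    · refine ⟨1, fun j => ?_⟩
      calc ‖μ j - lam j‖ ≤ 2 * ‖A‖ + 1 := by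
            linarith [norm_sub_le (μ j) (lam j), hμ.norm_le j, hlam.norm_le j,
              norm_le_norm_add_norm_sub' B A]
        _ = (2 * ‖A‖ + 1) / δ ^ ((1 : ℝ) / m) * δ ^ ((1 : ℝ) / m) := by
            rw [div_mul_cancel₀ _ (by positivity)]
        _ ≤ c' * ‖B - A‖ ^ ((1 : ℝ) / m) := by gcongr; exact le_max_right _ _
  refine ⟨π, ?_⟩
  simpa [mul_assoc] using sqrt_sum_sq_le_of_forall_le (by positivity) hπ
end
end

section
/- Let m ≥ 1, 0 ≤ m₀ ≤ m, and let ŵ_{−m},…,ŵ_m ∈ ℂ satisfy ŵ_{−k} = conj(ŵ_k) for all k and ŵ_m ≠ 0. For E ∈ ℝ define P_E(z) = ∑_{k=−m}^{m} ŵ_k·z^{k+m} − E·z^m ∈ ℂ[z]. Assume that for every E ∈ ℝ the number of roots of P_E with |z| = 1, counted with multiplicity, is at most 2m₀. Then there exists η > 0 such that for every E ∈ ℝ, P_E has at least m − m₀ roots (counted with multiplicity) of modulus ≥ 1 + η. -/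
/-!
Since `ŵ_{−k} = conj ŵ_k`, the polynomial `P_E` is self-inversive: its reverse is its complex
conjugate, so its roots are symmetric under `z ↦ 1 / z̄`. Together with the bound on the roots on
the unit circle, at most `m + m₀` of its `2m` roots lie in the closed unit disc.

If no uniform `η` existed, there would be `E_n` such that `P_{E_n}` has more than `m + m₀` roots in
`|z| < 1 + 1/(n+1)`. One of them lies in `1 < |z| ≤ 2`, where `E z^m = P_0(z)`; this bounds `E_n`,
so a subsequence converges to some `E₀`. The roots of a polynomial of fixed degree depend
continuously on its coefficients, so `P_{E₀}` would have more than `m + m₀` roots in the closed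
unit disc.
-/

open scoped Classical
open Polynomial

noncomputable section

/-- The polynomial `P_E(z) = ∑_{k=−m}^{m} ŵ_k z^{k+m} − E z^m`. -/
def PE (m : ℕ) (w : ℤ → ℂ) (E : ℝ) : Polynomial ℂ :=
  (∑ k ∈ Finset.Icc (-(m : ℤ)) (m : ℤ), C (w k) * X ^ (k + m).toNat) -
    C (E : ℂ) * X ^ m

open Filter Topology

theorem Multiset.exists_mem_and_not_of_card_filter_lt {α : Type*} {s : Multiset α}
    {p q : α → Prop} [DecidablePred p] [DecidablePred q]
    (h : Multiset.card (s.filter q) < Multiset.card (s.filter p)) : ∃ a ∈ s, p a ∧ ¬ q a := by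
  by_contra! hpq
  refine h.not_ge (Multiset.card_le_card (Multiset.le_filter.mpr ⟨Multiset.filter_le _ _, ?_⟩))
  exact fun a ha => hpq a (Multiset.mem_of_mem_filter ha) (Multiset.of_mem_filter ha)

theorem Multiset.exists_eq_map_univ_val {α : Type*} {s : Multiset α} {d : ℕ}
    (h : Multiset.card s = d) : ∃ f : Fin d → α, s = Finset.univ.val.map f := by
  subst h
  refine ⟨fun i => s.toList.get (i.cast (by simp)), ?_⟩
  conv_lhs => rw [← Multiset.coe_toList s]
  rw [Fin.univ_val_map]
  congr 1
  apply List.ext_get <;> simp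

theorem card_filter_norm_le_of_tendsto {ι E : Type*} [Fintype ι] [SeminormedAddCommGroup E]
    {N : ℕ} {x : ℕ → ι → E} {x₀ : ι → E} (hx : Tendsto x atTop (𝓝 x₀))
    {r : ℕ → ℝ} {ρ : ℝ} (hr : Tendsto r atTop (𝓝 ρ))
    (hN : ∀ n, N ≤ (Finset.univ.filter fun i => ‖x n i‖ < r n).card) :
    N ≤ (Finset.univ.filter fun i => ‖x₀ i‖ ≤ ρ).card := by
  have hev : ∀ᶠ n in atTop, ∀ i, ‖x n i‖ < r n → ‖x₀ i‖ ≤ ρ := by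
    refine eventually_all.mpr fun i => ?_
    by_cases hi : ‖x₀ i‖ ≤ ρ
    · exact .of_forall fun _ _ => hi
    have hlim : Tendsto (fun n => ‖x n i‖ - r n) atTop (𝓝 (‖x₀ i‖ - ρ)) :=
      (tendsto_pi_nhds.mp hx i).norm.sub hr
    filter_upwards [hlim.eventually_const_lt (sub_pos.mpr (not_le.mp hi))] with n hn hlt
    linarith
  obtain ⟨n, hn⟩ := hev.exists
  exact (hN n).trans (Finset.card_le_card (Finset.monotone_filter_right _ fun i _ => hn i))

namespace Polynomial

section Reverse

variable {K : Type*} [Field K]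

theorem reverse_X_sub_C_of_ne_zero {c : K} (hc : c ≠ 0) :
    (X - C c).reverse = C (-c) * (X - C c⁻¹) := by
  have hX : (X : K[X]).reverse = 1 := by
    simpa using (reverse_mul_X (1 : K[X])).trans (by simpa using reverse_C (1 : K))
  have hcc : C c * C c⁻¹ = 1 := by rw [← C_mul, mul_inv_cancel₀ hc, C_1]
  rw [sub_eq_add_neg, ← C_neg, reverse_add_C, hX, natDegree_X, pow_one, C_neg]
  linear_combination -hcc

theorem reverse_multiset_prod_X_sub_C (s : Multiset K) (hs : ∀ c ∈ s, c ≠ 0) :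
    (s.map (X - C ·)).prod.reverse =
      C (s.map (-·)).prod * (s.map fun c => X - C c⁻¹).prod := by
  induction s using Multiset.induction_on with
  | empty => simpa using reverse_C (1 : K)
  | cons a s ih =>
    rw [Multiset.forall_mem_cons] at hs
    simp only [Multiset.map_cons, Multiset.prod_cons, reverse_mul_of_domain,
      ih hs.2, reverse_X_sub_C_of_ne_zero hs.1, C_mul]
    ring

theorem ne_zero_of_mem_roots_of_coeff_zero_ne_zero {p : K[X]} (h0 : p.coeff 0 ≠ 0) {c : K}
    (hc : c ∈ p.roots) : c ≠ 0 := by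
  rintro rfl
  exact h0 (by simpa [coeff_zero_eq_eval_zero] using (mem_roots'.mp hc).2)

theorem roots_reverse {p : K[X]} (hp : p.Splits) (h0 : p.coeff 0 ≠ 0) :
    p.reverse.roots = p.roots.map (·⁻¹) := by
  have hroots (c : K) : c ∈ p.roots → c ≠ 0 := ne_zero_of_mem_roots_of_coeff_zero_ne_zero h0
  have hmap : p.roots.map (fun c => X - C c⁻¹) = (p.roots.map (·⁻¹)).map (X - C ·) := by
    rw [Multiset.map_map]; rfl
  have hlead : p.leadingCoeff ≠ 0 := leadingCoeff_ne_zero.mpr fun h => h0 (by simp [h])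
  conv_lhs => rw [hp.eq_prod_roots]
  rw [reverse_mul_of_domain, reverse_C, reverse_multiset_prod_X_sub_C _ hroots, ← mul_assoc,
    ← C_mul, roots_C_mul, hmap, roots_multiset_prod_X_sub_C]
  exact mul_ne_zero hlead (Multiset.prod_ne_zero (by simpa using hroots 0))

end Reverse

section SelfInversive

variable {p : ℂ[X]}

theorem map_conj_inv_roots (hp : p.reverse = p.map (starRingEnd ℂ)) (h0 : p.coeff 0 ≠ 0) :
    p.roots.map (fun z => (starRingEnd ℂ z)⁻¹) = p.roots := by
  have h := congrArg (Multiset.map (starRingEnd ℂ)) (congrArg roots hp)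
  rw [roots_reverse (IsAlgClosed.splits p) h0, (IsAlgClosed.splits p).roots_map,
    Multiset.map_map, Multiset.map_map] at h
  simpa [Function.comp_def] using h

theorem card_roots_one_lt_norm (hp : p.reverse = p.map (starRingEnd ℂ)) (h0 : p.coeff 0 ≠ 0) :
    Multiset.card (p.roots.filter (1 < ‖·‖)) = Multiset.card (p.roots.filter (‖·‖ < 1)) := by
  conv_lhs => rw [← map_conj_inv_roots hp h0]
  rw [Multiset.filter_map, Multiset.card_map]
  congr 1
  refine Multiset.filter_congr fun z hz => ?_
  have hz0 := norm_pos_iff.mpr (ne_zero_of_mem_roots_of_coeff_zero_ne_zero h0 hz)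
  simp [one_lt_inv₀ hz0]

theorem two_mul_card_roots_norm_le_one (hp : p.reverse = p.map (starRingEnd ℂ))
    (h0 : p.coeff 0 ≠ 0) :
    2 * Multiset.card (p.roots.filter (‖·‖ ≤ 1)) =
      p.natDegree + Multiset.card (p.roots.filter (‖·‖ = 1)) := by
  have hdisc : p.roots.filter (‖·‖ < 1) + p.roots.filter (‖·‖ = 1) = p.roots.filter (‖·‖ ≤ 1) := by
    rw [Multiset.filter_add_filter,
      (Multiset.filter_eq_nil (p := fun z : ℂ => ‖z‖ < 1 ∧ ‖z‖ = 1)).mpr fun z _ h => h.1.ne h.2,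
      add_zero]
    exact Multiset.filter_congr fun z _ => le_iff_lt_or_eq.symm
  have hsplit := congrArg Multiset.card (p.roots.filter_add_not (‖·‖ ≤ 1))
  simp only [Multiset.card_add, not_le, splits_iff_card_roots.mp (IsAlgClosed.splits p)] at hsplit
  have := congrArg Multiset.card hdisc
  have := card_roots_one_lt_norm hp h0
  rw [Multiset.card_add] at *
  omega

end SelfInversive

section Continuity

theorem bddAbove_range_cauchyBound {K : Type*} [NormedDivisionRing K] {P : ℕ → K[X]} {p : K[X]}
    (hdeg : ∀ n, (P n).natDegree = p.natDegree)
    (hlead : ∀ n, (P n).leadingCoeff = p.leadingCoeff)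
    (hcoeff : ∀ i, Tendsto (fun n => (P n).coeff i) atTop (𝓝 (p.coeff i))) :
    BddAbove (Set.range fun n => cauchyBound (P n)) := by
  choose B hB using fun i => (hcoeff i).nnnorm.bddAbove_range
  refine ⟨(Finset.range p.natDegree).sup B / ‖p.leadingCoeff‖₊ + 1, ?_⟩
  rintro _ ⟨n, rfl⟩
  simp only [cauchyBound, hdeg n, hlead n]
  gcongr
  exact hB _ ⟨n, rfl⟩

theorem tendsto_eval_of_tendsto_coeff {R : Type*} [Semiring R] [TopologicalSpace R]
    [IsTopologicalSemiring R] {P : ℕ → R[X]} {p : R[X]} {d : ℕ}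
    (hdeg : ∀ n, (P n).natDegree ≤ d) (hp : p.natDegree ≤ d)
    (hcoeff : ∀ i, Tendsto (fun n => (P n).coeff i) atTop (𝓝 (p.coeff i))) (z : R) :
    Tendsto (fun n => (P n).eval z) atTop (𝓝 (p.eval z)) := by
  simp only [eval_eq_sum_range' (Nat.lt_succ_of_le (hdeg _)),
    eval_eq_sum_range' (Nat.lt_succ_of_le hp)]
  exact tendsto_finsetSum _ fun i _ => (hcoeff i).mul_const _

theorem roots_eq_map_of_eval_eq_mul_prod {R ι : Type*} [CommRing R] [IsDomain R] [Infinite R]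
    [Fintype ι] {p : R[X]} {a : R} (ha : a ≠ 0) {y : ι → R} (h : ∀ z, p.eval z = a * ∏ i, (z - y i)) :
    p.roots = Finset.univ.val.map y := by
  have hp : p = C a * ((Finset.univ.val.map y).map (X - C ·)).prod :=
    Polynomial.funext fun z => by
      simp only [h, eval_mul, eval_C, eval_multiset_prod, Multiset.map_map, Function.comp_def,
        eval_sub, eval_X]
      rfl
  rw [hp, roots_C_mul _ ha, roots_multiset_prod_X_sub_C]

theorem le_card_roots_norm_le_of_tendsto {P : ℕ → ℂ[X]} {p : ℂ[X]} (hp : p ≠ 0)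
    (hdeg : ∀ n, (P n).natDegree = p.natDegree)
    (hlead : ∀ n, (P n).leadingCoeff = p.leadingCoeff)
    (hcoeff : ∀ i, Tendsto (fun n => (P n).coeff i) atTop (𝓝 (p.coeff i)))
    {r : ℕ → ℝ} {ρ : ℝ} (hr : Tendsto r atTop (𝓝 ρ)) {N : ℕ}
    (hN : ∀ n, N ≤ Multiset.card ((P n).roots.filter (‖·‖ < r n))) :
    N ≤ Multiset.card (p.roots.filter (‖·‖ ≤ ρ)) := by
  have ha : p.leadingCoeff ≠ 0 := leadingCoeff_ne_zero.mpr hp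
  have hPne (n : ℕ) : P n ≠ 0 := leadingCoeff_ne_zero.mp (hlead n ▸ ha)
  -- List the roots of `P n` as a vector `x n ∈ ℂ^d`; these vectors are bounded (Cauchy's bound),
  -- and along a convergent subsequence the limit vector lists the roots of `p`.
  choose x hx using fun n => Multiset.exists_eq_map_univ_val
    ((splits_iff_card_roots.mp (IsAlgClosed.splits (P n))).trans (hdeg n))
  have hPeval (n : ℕ) (z : ℂ) : (P n).eval z = p.leadingCoeff * ∏ i, (z - x n i) := by
    rw [(IsAlgClosed.splits (P n)).eval_eq_prod_roots, hlead, hx, Multiset.map_map]; rfl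
  obtain ⟨R, hR⟩ := bddAbove_range_cauchyBound hdeg hlead hcoeff
  have hbdd (n : ℕ) : x n ∈ Metric.closedBall 0 R := by
    refine mem_closedBall_zero_iff.mpr ((pi_norm_le_iff_of_nonneg R.2).mpr fun i => ?_)
    have hroot : (P n).IsRoot (x n i) := (mem_roots (hPne n)).mp
      (hx n ▸ Multiset.mem_map_of_mem _ (Finset.mem_univ_val i))
    exact NNReal.coe_le_coe.mpr ((hroot.norm_lt_cauchyBound (hPne n)).le.trans (hR ⟨n, rfl⟩))
  obtain ⟨x₀, -, φ, hφ, hlim⟩ := tendsto_subseq_of_bounded Metric.isBounded_closedBall hbdd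
  have hpeval (z : ℂ) : p.eval z = p.leadingCoeff * ∏ i, (z - x₀ i) := by
    refine tendsto_nhds_unique ((tendsto_eval_of_tendsto_coeff (fun n => (hdeg n).le) le_rfl
      hcoeff z).comp hφ.tendsto_atTop) ?_
    simp only [Function.comp_def, hPeval]
    exact tendsto_const_nhds.mul
      (tendsto_finsetProd _ fun i _ => tendsto_const_nhds.sub (tendsto_pi_nhds.mp hlim i))
  rw [roots_eq_map_of_eval_eq_mul_prod ha hpeval, Multiset.filter_map, Multiset.card_map]
  refine card_filter_norm_le_of_tendsto hlim (hr.comp hφ.tendsto_atTop) fun n => ?_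
  have h := hN (φ n)
  rwa [hx, Multiset.filter_map, Multiset.card_map] at h

end Continuity

end Polynomial

section PE

variable {m : ℕ} {w : ℤ → ℂ}

theorem PE_coeff (E : ℝ) (j : ℕ) :
    (PE m w E).coeff j =
      (if j ≤ 2 * m then w (j - m) else 0) - (if j = m then (E : ℂ) else 0) := by
  rw [PE, coeff_sub, finsetSum_coeff, coeff_C_mul_X_pow]
  simp only [coeff_C_mul, coeff_X_pow, mul_ite, mul_one, mul_zero]
  congr 1
  split_ifs with hj
  · rw [Finset.sum_eq_single ((j : ℤ) - m)]
    · rw [if_pos (by omega)]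
    · intro k hk hne
      rw [Finset.mem_Icc] at hk
      rw [if_neg (by omega)]
    · intro h
      exact absurd (Finset.mem_Icc.mpr (by omega)) h
  · refine Finset.sum_eq_zero fun k hk => ?_
    rw [Finset.mem_Icc] at hk
    rw [if_neg (by omega)]

theorem PE_eq_sub (E : ℝ) : PE m w E = PE m w 0 - C (E : ℂ) * X ^ m := by
  simp [PE]

theorem PE_natDegree (hm : 1 ≤ m) (hwm : w m ≠ 0) (E : ℝ) : (PE m w E).natDegree = 2 * m := by
  refine natDegree_eq_of_le_of_coeff_ne_zero ?_ ?_
  · refine natDegree_le_iff_coeff_eq_zero.mpr fun j hj => ?_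
    rw [PE_coeff, if_neg (by omega), if_neg (by omega), sub_zero]
  · rw [PE_coeff, if_pos le_rfl, if_neg (by omega), sub_zero]
    convert hwm using 2
    push_cast
    ring

theorem PE_leadingCoeff (hm : 1 ≤ m) (hwm : w m ≠ 0) (E : ℝ) :
    (PE m w E).leadingCoeff = w m := by
  rw [leadingCoeff, PE_natDegree hm hwm, PE_coeff, if_pos le_rfl, if_neg (by omega), sub_zero]
  congr 1
  push_cast
  ring

theorem PE_coeff_zero_ne_zero (hm : 1 ≤ m) (hsymm : ∀ k : ℤ, w (-k) = starRingEnd ℂ (w k))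
    (hwm : w m ≠ 0) (E : ℝ) : (PE m w E).coeff 0 ≠ 0 := by
  rw [PE_coeff, if_pos (Nat.zero_le _), if_neg (by omega), sub_zero, Nat.cast_zero, zero_sub,
    hsymm]
  exact (_root_.map_ne_zero _).mpr hwm

theorem PE_reverse (hm : 1 ≤ m) (hsymm : ∀ k : ℤ, w (-k) = starRingEnd ℂ (w k))
    (hwm : w m ≠ 0) (E : ℝ) : (PE m w E).reverse = (PE m w E).map (starRingEnd ℂ) := by
  ext j
  rw [coeff_reverse, coeff_map, PE_natDegree hm hwm]
  by_cases hj : j ≤ 2 * m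
  · rw [revAt_le hj, PE_coeff, PE_coeff, if_pos (Nat.sub_le _ _), if_pos hj, map_sub,
      ← hsymm, apply_ite (starRingEnd ℂ), Complex.conj_ofReal, map_zero]
    congr 1
    · congr 1
      push_cast [Nat.cast_sub hj]
      ring
    · exact if_congr (by omega) rfl rfl
  · rw [revAt_eq_self_of_lt (not_le.mp hj), PE_coeff, if_neg hj, if_neg (by omega), sub_zero,
      map_zero]

theorem card_roots_PE_norm_le_one_le (hm : 1 ≤ m)
    (hsymm : ∀ k : ℤ, w (-k) = starRingEnd ℂ (w k)) (hwm : w m ≠ 0) {m₀ : ℕ} {E : ℝ}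
    (hcirc : Multiset.card ((PE m w E).roots.filter (‖·‖ = 1)) ≤ 2 * m₀) :
    Multiset.card ((PE m w E).roots.filter (‖·‖ ≤ 1)) ≤ m + m₀ := by
  have h := two_mul_card_roots_norm_le_one (PE_reverse hm hsymm hwm E)
    (PE_coeff_zero_ne_zero hm hsymm hwm E)
  rw [PE_natDegree hm hwm] at h
  omega

theorem tendsto_PE_coeff {E : ℕ → ℝ} {E₀ : ℝ} (hE : Tendsto E atTop (𝓝 E₀)) (j : ℕ) :
    Tendsto (fun n => (PE m w (E n)).coeff j) atTop (𝓝 ((PE m w E₀).coeff j)) := by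
  simp only [PE_coeff]
  refine tendsto_const_nhds.sub ?_
  split_ifs
  · exact (Complex.continuous_ofReal.tendsto E₀).comp hE
  · exact tendsto_const_nhds

theorem exists_abs_le_of_mem_roots_PE :
    ∃ M, ∀ (E : ℝ) (z : ℂ), z ∈ (PE m w E).roots → 1 ≤ ‖z‖ → ‖z‖ ≤ 2 → |E| ≤ M := by
  obtain ⟨M, hM⟩ := (isCompact_closedBall (0 : ℂ) 2).exists_bound_of_continuousOn
    (PE m w 0).continuous.continuousOn
  refine ⟨M, fun E z hz h1 h2 => ?_⟩
  have hroot : (PE m w 0).eval z = E * z ^ m := by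
    have := (mem_roots'.mp hz).2
    rwa [IsRoot, PE_eq_sub, eval_sub, sub_eq_zero, eval_mul, eval_C, eval_pow, eval_X] at this
  calc |E| ≤ |E| * ‖z‖ ^ m := le_mul_of_one_le_right (abs_nonneg E) (one_le_pow₀ h1)
    _ = ‖(PE m w 0).eval z‖ := by
      rw [hroot, norm_mul, norm_pow, Complex.norm_real, Real.norm_eq_abs]
    _ ≤ M := hM z (mem_closedBall_zero_iff.mpr h2)

end PE

theorem uniform_gap_of_large_roots_general
    (m m₀ : ℕ) (hm : 1 ≤ m) (w : ℤ → ℂ)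
    (hsymm : ∀ k : ℤ, w (-k) = starRingEnd ℂ (w k)) (hwm : w (m : ℤ) ≠ 0)
    (hcirc : ∀ E : ℝ,
      (((PE m w E).roots).filter fun z => ‖z‖ = 1).card ≤ 2 * m₀) :
    ∃ η : ℝ, 0 < η ∧ ∀ E : ℝ,
      m - m₀ ≤ (((PE m w E).roots).filter fun z => 1 + η ≤ ‖z‖).card := by
  have hdisc (E : ℝ) := card_roots_PE_norm_le_one_le hm hsymm hwm (hcirc E)
  by_contra! hcon
  choose E hE using fun n : ℕ => hcon (1 / (n + 1)) Nat.one_div_pos_of_nat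
  have hsmall (n : ℕ) : m + m₀ <
      Multiset.card ((PE m w (E n)).roots.filter (‖·‖ < 1 + 1 / ((n : ℝ) + 1))) := by
    have h := congrArg Multiset.card
      ((PE m w (E n)).roots.filter_add_not fun z => 1 + 1 / ((n : ℝ) + 1) ≤ ‖z‖)
    simp only [Multiset.card_add, not_le, splits_iff_card_roots.mp (IsAlgClosed.splits _),
      PE_natDegree hm hwm] at h
    have := hE n
    omega
  obtain ⟨M, hM⟩ := exists_abs_le_of_mem_roots_PE (m := m) (w := w)
  have hbdd (n : ℕ) : E n ∈ Set.Icc (-M) M := by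
    obtain ⟨z, hz, hzr, hz1⟩ :=
      Multiset.exists_mem_and_not_of_card_filter_lt ((hdisc (E n)).trans_lt (hsmall n))
    have : 1 / ((n : ℝ) + 1) ≤ 1 := (div_le_one (by positivity)).mpr (by simp)
    exact abs_le.mp (hM _ z hz (not_le.mp hz1).le (by linarith))
  obtain ⟨E₀, -, φ, hφ, hlim⟩ := tendsto_subseq_of_bounded (Metric.isBounded_Icc (-M) M) hbdd
  have hr : Tendsto (fun n => 1 + 1 / ((φ n : ℝ) + 1)) atTop (𝓝 1) := by
    simpa [Function.comp_def] using
      ((tendsto_one_div_add_atTop_nhds_zero_nat (𝕜 := ℝ)).const_add 1).comp hφ.tendsto_atTop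
  have hlimit := le_card_roots_norm_le_of_tendsto
    (leadingCoeff_ne_zero.mp ((PE_leadingCoeff hm hwm E₀).symm ▸ hwm))
    (fun n => by rw [PE_natDegree hm hwm, PE_natDegree hm hwm])
    (fun n => by rw [PE_leadingCoeff hm hwm, PE_leadingCoeff hm hwm])
    (tendsto_PE_coeff hlim) hr (fun n => hsmall (φ n))
  exact (hlimit.trans (hdisc E₀)).not_gt (Nat.lt_succ_self _)

/-- **Uniform gap for the large roots (Ge–You–Zhao, proof of Proposition 5.3)**:
if for every `E ∈ ℝ` the polynomial `P_E` has at most `2m₀` roots on the unit circle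
(with multiplicity), then there exists `η > 0` such that for every `E ∈ ℝ`, `P_E`
has at least `m − m₀` roots (with multiplicity) of modulus `≥ 1 + η`. -/
theorem uniform_gap_of_large_roots
    (m m₀ : ℕ) (hm : 1 ≤ m) (hm₀ : m₀ ≤ m) (w : ℤ → ℂ)
    (hsymm : ∀ k : ℤ, w (-k) = starRingEnd ℂ (w k)) (hwm : w (m : ℤ) ≠ 0)
    (hcirc : ∀ E : ℝ,
      (((PE m w E).roots).filter fun z => ‖z‖ = 1).card ≤ 2 * m₀) :
    ∃ η : ℝ, 0 < η ∧ ∀ E : ℝ,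
      m - m₀ ≤ (((PE m w E).roots).filter fun z => 1 + η ≤ ‖z‖).card :=
  uniform_gap_of_large_roots_general m m₀ hm w hsymm hwm hcirc
end
end

section
/- Let d ≥ 1, r ≥ 1 and N ≥ 1 be integers. Let R be a symmetric relation on {1,…,r} with (k,k) ∉ R for all k, and for each (k,ℓ) ∈ R let n_{k,ℓ} ∈ ℤ^d satisfy n_{ℓ,k} = −n_{k,ℓ} and |n_{k,ℓ}| ≤ N. Assume the following consistency property: whenever (ℓ,j) ∈ R and (ℓ′,j) ∈ R with ℓ ≠ ℓ′, then (ℓ,ℓ′) ∈ R and n_{ℓ,j} − n_{ℓ′,j} = n_{ℓ,ℓ′}. Then there exist m₁,…,m_r ∈ ℤ^d with max_{1≤ℓ≤r} |m_ℓ| ≤ r·N such that m_k − m_ℓ = −n_{k,ℓ} for every (k,ℓ) ∈ R. -/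
/-!
Let `a ~ b` mean `a = b ∨ R a b`. Consistency makes `~` transitive, so it is an equivalence
relation, and on each class the sites, extended by `0` on the diagonal, form an additive cocycle:
`n a c = n a b + n b c`. A cocycle on an equivalence relation is a coboundary: fixing a
representative `p` of each class, `m a := n p a` satisfies `n a b = m b - m a`. Every `m a` is a
resonant site or `0`, so `‖m a‖ ≤ N ≤ r N`.
-/

open Relation

theorem Relation.equivalence_reflGen {α : Type*} {r : α → α → Prop} (hs : ∀ ⦃a b⦄, r a b → r b a)
    (ht : ∀ ⦃a b c⦄, r a b → r b c → a ≠ c → r a c) : Equivalence (ReflGen r) where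
  refl _ := .refl
  symm
    | .refl => .refl
    | .single h => .single (hs h)
  trans := by
    rintro a b c (_ | hab) (_ | hbc)
    · exact .refl
    · exact .single hbc
    · exact .single hab
    · by_cases hac : a = c
      · exact hac ▸ .refl
      · exact .single (ht hab hbc hac)

theorem Equivalence.exists_eq_sub_of_cocycle {α G : Type*} [AddCommGroup G] {r : α → α → Prop}
    (hr : Equivalence r) (c : α → α → G) (hc : ∀ ⦃a b d⦄, r a b → r b d → c a d = c a b + c b d) :
    ∃ m : α → G, (∀ a, ∃ b, r b a ∧ m a = c b a) ∧ ∀ a b, r a b → c a b = m b - m a := by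
  let s : Setoid α := ⟨r, hr⟩
  let rep (a : α) : α := (⟦a⟧ : Quotient s).out
  have hrep_rel (a : α) : r (rep a) a := Quotient.mk_out (s := s) a
  have hrep_eq {a b : α} (h : r a b) : rep a = rep b := by
    simp only [rep, Quotient.sound (s := s) h]
  refine ⟨fun a => c (rep a) a, fun a => ⟨rep a, hrep_rel a, rfl⟩, fun a b hab => ?_⟩
  show c a b = c (rep b) b - c (rep a) a
  rw [← hrep_eq hab, hc (hrep_rel a) hab]
  abel

def offDiagPart {α G : Type*} [DecidableEq α] [Zero G] (n : α → α → G) (a b : α) : G :=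
  if a = b then 0 else n a b

theorem offDiagPart_of_ne {α G : Type*} [DecidableEq α] [Zero G] (n : α → α → G) {a b : α}
    (h : a ≠ b) : offDiagPart n a b = n a b :=
  if_neg h

theorem offDiagPart_add_offDiagPart {α G : Type*} [DecidableEq α] [AddCommGroup G]
    {R : α → α → Prop} {n : α → α → G} (hsymm : ∀ ⦃a b⦄, R a b → R b a)
    (hanti : ∀ a b, R a b → n b a = -n a b)
    (hcons : ∀ a b c, R a c → R b c → a ≠ b → R a b ∧ n a c - n b c = n a b)
    {a b c : α} (hab : ReflGen R a b) (hbc : ReflGen R b c) :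
    offDiagPart n a c = offDiagPart n a b + offDiagPart n b c := by
  rcases hab with _ | hab
  · simp [offDiagPart]
  rcases hbc with _ | hbc
  · simp [offDiagPart]
  by_cases hab' : a = b
  · subst hab'
    simp [offDiagPart]
  by_cases hbc' : b = c
  · subst hbc'
    simp [offDiagPart]
  rw [offDiagPart_of_ne n hab', offDiagPart_of_ne n hbc']
  by_cases hac : a = c
  · subst hac
    rw [offDiagPart, if_pos rfl, hanti a b hab, add_neg_cancel]
  · rw [offDiagPart_of_ne n hac, ← (hcons a c b hab (hsymm hbc) hac).2, hanti b c hbc,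
      sub_neg_eq_add]

theorem resonance_compensating_vectors_general
    (d r N : ℕ)
    (R : Fin r → Fin r → Prop)
    (hsymm : ∀ k ℓ, R k ℓ → R ℓ k)
    (hirr : ∀ k, ¬ R k k)
    (n : Fin r → Fin r → (Fin d → ℤ))
    (hanti : ∀ k ℓ, R k ℓ → n ℓ k = -n k ℓ)
    (hbound : ∀ k ℓ, R k ℓ → ‖n k ℓ‖ ≤ (N : ℝ))
    (hconsistent : ∀ ℓ ℓ' j : Fin r, R ℓ j → R ℓ' j → ℓ ≠ ℓ' →
      R ℓ ℓ' ∧ n ℓ j - n ℓ' j = n ℓ ℓ') :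
    ∃ mv : Fin r → (Fin d → ℤ),
      (∀ ℓ, ‖mv ℓ‖ ≤ (r : ℝ) * N) ∧
      ∀ k ℓ, R k ℓ → mv k - mv ℓ = -n k ℓ := by
  have hsymm' : ∀ ⦃a b⦄, R a b → R b a := fun a b => hsymm a b
  have hequiv : Equivalence (ReflGen R) := Relation.equivalence_reflGen hsymm'
    fun a b c hab hbc hac => (hconsistent a c b hab (hsymm' hbc) hac).1
  obtain ⟨m, hm_site, hm_sub⟩ := hequiv.exists_eq_sub_of_cocycle (offDiagPart n)
    fun _ _ _ => offDiagPart_add_offDiagPart hsymm' hanti hconsistent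
  refine ⟨m, fun ℓ => ?_, fun k ℓ hkℓ => ?_⟩
  · obtain ⟨k, hkℓ, hmℓ⟩ := hm_site ℓ
    have hm_le : ‖m ℓ‖ ≤ N := by
      rw [hmℓ, offDiagPart]
      split_ifs with hk
      · simp
      · rcases hkℓ with _ | hkℓ
        exacts [absurd rfl hk, hbound k ℓ hkℓ]
    have hr : (1 : ℝ) ≤ r := by exact_mod_cast ℓ.pos
    exact hm_le.trans (le_mul_of_one_le_left N.cast_nonneg hr)
  · have hne : k ≠ ℓ := fun h => hirr k (h ▸ hkℓ)
    rw [← offDiagPart_of_ne n hne, hm_sub k ℓ (.single hkℓ), neg_sub]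

/-- **Existence of the resonance-compensating vectors (Lemma 3.5 of Ge–You–Zhao)**:
given a symmetric irreflexive relation `R` on `{1,…,r}` and resonant sites
`n k ℓ ∈ ℤ^d` with `n ℓ k = −n k ℓ`, `|n k ℓ| ≤ N` satisfying the consistency
property, there exist `m₁,…,m_r ∈ ℤ^d` with `|m_ℓ| ≤ r·N` and
`m_k − m_ℓ = −n k ℓ` for every `(k,ℓ) ∈ R`.  Here `|·|` is the sup norm on `ℤ^d`. -/
theorem resonance_compensating_vectors
    (d r N : ℕ) (hd : 1 ≤ d) (hr : 1 ≤ r) (hN : 1 ≤ N)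
    (R : Fin r → Fin r → Prop)
    (hsymm : ∀ k ℓ, R k ℓ → R ℓ k)
    (hirr : ∀ k, ¬ R k k)
    (n : Fin r → Fin r → (Fin d → ℤ))
    (hanti : ∀ k ℓ, R k ℓ → n ℓ k = -n k ℓ)
    (hbound : ∀ k ℓ, R k ℓ → ‖n k ℓ‖ ≤ (N : ℝ))
    (hconsistent : ∀ ℓ ℓ' j : Fin r, R ℓ j → R ℓ' j → ℓ ≠ ℓ' →
      R ℓ ℓ' ∧ n ℓ j - n ℓ' j = n ℓ ℓ') :
    ∃ mv : Fin r → (Fin d → ℤ),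
      (∀ ℓ, ‖mv ℓ‖ ≤ (r : ℝ) * N) ∧
      ∀ k ℓ, R k ℓ → mv k - mv ℓ = -n k ℓ :=
  resonance_compensating_vectors_general d r N R hsymm hirr n hanti hbound hconsistent
end

section
/- Let m ≥ 1 and let L, F be m×m complex matrices with ‖L‖ ≤ 1/8 and ‖F‖ ≤ 1/8, where ‖·‖ is the operator norm. Then there exists an m×m complex matrix G with exp(L + F) = exp(L)·exp(G) and ‖G‖ ≤ 2·‖F‖. -/
open scoped Matrix.Norms.L2Operator

/-!
On the ball of radius `r`, `exp` differs from the identity by a map with Lipschitz constant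
`e^r - 1`, so the contraction argument behind the inverse function theorem shows that `exp` maps
the ball of radius `r` about `0` onto the ball of radius `(1 - (e^r - 1)) r` about `1`. Taking
`r = 2‖F‖`, it suffices that `exp (-L) exp (L + F)` lies in that ball. Bounding
`‖exp x - exp y‖` by the chord slope `(e^a - e^b) / (a - b)` of the real exponential, where
`‖x‖ ≤ a = 1/4` and `‖y‖ ≤ b = 1/8`, puts it within
`e^{1/8} · 8 (e^{1/4} - e^{1/8}) ‖F‖ ≈ 1.37 ‖F‖` of `1`, below the radius
`≥ 2 (2 - e^{1/4}) ‖F‖ ≈ 1.43 ‖F‖`.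
-/

open Finset Metric Set NormedSpace
open scoped Nat

theorem Real.exp_one_div_eight_mul_slope_le :
    Real.exp (1 / 8) * ((Real.exp (1 / 4) - Real.exp (1 / 8)) / (1 / 4 - 1 / 8))
      ≤ 2 * (2 - Real.exp (1 / 4)) := by
  have hsq : Real.exp (1 / 4) = Real.exp (1 / 8) ^ 2 := by rw [sq, ← Real.exp_add]; norm_num
  have hlow : 1 ≤ Real.exp (1 / 8) := Real.one_le_exp (by norm_num)
  have hup : Real.exp (1 / 8) ≤ 1.134 := by
    refine (Real.exp_bound' (by norm_num) (by norm_num) (n := 3) (by norm_num)).trans ?_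
    norm_num [Finset.sum_range_succ, Nat.factorial]
  rw [hsq, show (1 : ℝ) / 4 - 1 / 8 = 8⁻¹ by norm_num, div_inv_eq_mul]
  nlinarith [mul_le_mul hup hup (by positivity) (by norm_num)]

section BanachAlgebra

variable {𝔸 : Type*} [NormedRing 𝔸]

theorem norm_pow_sub_pow_le [NormOneClass 𝔸] {x y : 𝔸} {a b : ℝ} (ha : ‖x‖ ≤ a) (hb : ‖y‖ ≤ b)
    (n : ℕ) :
    ‖x ^ n - y ^ n‖ ≤ (∑ i ∈ range n, a ^ i * b ^ (n - 1 - i)) * ‖x - y‖ := by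
  induction n with
  | zero => simp
  | succ n ih =>
    have ha0 : 0 ≤ a := (norm_nonneg x).trans ha
    have hyn : ‖y ^ n‖ ≤ b ^ n := (norm_pow_le y n).trans (pow_le_pow_left₀ (norm_nonneg _) hb n)
    have hsplit : x ^ (n + 1) - y ^ (n + 1) = x * (x ^ n - y ^ n) + (x - y) * y ^ n := by
      rw [mul_sub, sub_mul, pow_succ' x, pow_succ' y]; abel
    have hgeom : ∑ i ∈ range (n + 1), a ^ i * b ^ (n + 1 - 1 - i)
        = a * ∑ i ∈ range n, a ^ i * b ^ (n - 1 - i) + b ^ n := by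
      rw [sum_range_succ', mul_sum]
      congr 1
      · refine sum_congr rfl fun i _ => ?_
        rw [show n + 1 - 1 - (i + 1) = n - 1 - i by omega, pow_succ', mul_assoc]
      · simp
    calc ‖x ^ (n + 1) - y ^ (n + 1)‖
        ≤ ‖x‖ * ‖x ^ n - y ^ n‖ + ‖x - y‖ * ‖y ^ n‖ := by
          rw [hsplit]; exact (norm_add_le _ _).trans (add_le_add (norm_mul_le _ _) (norm_mul_le _ _))
      _ ≤ a * ((∑ i ∈ range n, a ^ i * b ^ (n - 1 - i)) * ‖x - y‖) + ‖x - y‖ * b ^ n := by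
          gcongr
      _ = _ := by rw [hgeom]; ring

variable [NormedAlgebra ℝ 𝔸]

lemma norm_inv_factorial_smul (n : ℕ) (z : 𝔸) :
    ‖((n ! : ℝ)⁻¹) • z‖ = (n ! : ℝ)⁻¹ * ‖z‖ := by
  rw [norm_smul, Real.norm_of_nonneg (by positivity)]

theorem hasSum_exp_sub_exp [CompleteSpace 𝔸] (x y : 𝔸) :
    HasSum (fun n => ((n ! : ℝ)⁻¹) • (x ^ n - y ^ n)) (exp x - exp y) := by
  simpa only [smul_sub] using (exp_series_hasSum_exp' (𝕂 := ℝ) x).sub (exp_series_hasSum_exp' y)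

variable [NormOneClass 𝔸] [CompleteSpace 𝔸]

theorem norm_exp_le (x : 𝔸) : ‖exp x‖ ≤ Real.exp ‖x‖ := by
  rw [Real.exp_eq_exp_ℝ]
  refine HasSum.norm_le_of_bounded (exp_series_hasSum_exp' (𝕂 := ℝ) x)
    (expSeries_div_hasSum_exp ‖x‖) fun n => ?_
  rw [norm_inv_factorial_smul, div_eq_inv_mul]
  gcongr
  exact norm_pow_le x n

theorem norm_exp_sub_exp_le {x y : 𝔸} {a b : ℝ} (ha : ‖x‖ ≤ a) (hb : ‖y‖ ≤ b) (hba : b < a) :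
    ‖exp x - exp y‖ ≤ (Real.exp a - Real.exp b) / (a - b) * ‖x - y‖ := by
  have hseries : HasSum (fun n : ℕ => (a ^ n / (n ! : ℝ) - b ^ n / (n ! : ℝ)) / (a - b) * ‖x - y‖)
      ((Real.exp a - Real.exp b) / (a - b) * ‖x - y‖) := by
    simp only [Real.exp_eq_exp_ℝ]
    exact (((expSeries_div_hasSum_exp a).sub (expSeries_div_hasSum_exp b)).div_const _).mul_right _
  refine (hasSum_exp_sub_exp x y).norm_le_of_bounded hseries fun n => ?_
  have hgeom : ∑ i ∈ range n, a ^ i * b ^ (n - 1 - i) = (a ^ n - b ^ n) / (a - b) := by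
    rw [eq_div_iff (sub_ne_zero.2 hba.ne'), geom_sum₂_mul]
  rw [norm_inv_factorial_smul]
  calc (n ! : ℝ)⁻¹ * ‖x ^ n - y ^ n‖
      ≤ (n ! : ℝ)⁻¹ * ((a ^ n - b ^ n) / (a - b) * ‖x - y‖) := by
        rw [← hgeom]; gcongr; exact norm_pow_sub_pow_le ha hb n
    _ = _ := by ring

theorem norm_exp_sub_exp_sub_sub_le {x y : 𝔸} {r : ℝ} (hx : ‖x‖ ≤ r) (hy : ‖y‖ ≤ r) :
    ‖exp x - exp y - (x - y)‖ ≤ (Real.exp r - 1) * ‖x - y‖ := by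
  -- the terms of index 0 and 1 of the series of `exp x - exp y` add up to `x - y`
  have htail : HasSum (fun n => (((n + 2) ! : ℝ)⁻¹) • (x ^ (n + 2) - y ^ (n + 2)))
      (exp x - exp y - (x - y)) := by
    simpa [sum_range_succ] using (hasSum_nat_add_iff' 2).2 (hasSum_exp_sub_exp x y)
  have hseries : HasSum (fun n => r ^ (n + 1) / (n + 1) ! * ‖x - y‖)
      ((Real.exp r - 1) * ‖x - y‖) := by
    refine HasSum.mul_right _ ?_
    simpa [Real.exp_eq_exp_ℝ] using (hasSum_nat_add_iff' 1).2 (expSeries_div_hasSum_exp r)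
  refine htail.norm_le_of_bounded hseries fun n => ?_
  have hpow := norm_pow_sub_pow_le hx hy (n + 2)
  rw [geom_sum₂_self] at hpow
  rw [norm_inv_factorial_smul, Nat.factorial_succ (n + 1)]
  calc ((((n + 1 + 1) * (n + 1) ! : ℕ) : ℝ))⁻¹ * ‖x ^ (n + 2) - y ^ (n + 2)‖
      ≤ ((((n + 1 + 1) * (n + 1) ! : ℕ) : ℝ))⁻¹ * ((n + 2 : ℕ) * r ^ (n + 2 - 1) * ‖x - y‖) := by
        gcongr
    _ = r ^ (n + 1) / (n + 1) ! * ‖x - y‖ := by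
        push_cast
        field_simp
        ring_nf

theorem approximatesLinearOn_exp {r : ℝ} (hr : 0 ≤ r) :
    ApproximatesLinearOn (exp : 𝔸 → 𝔸) (ContinuousLinearMap.id ℝ 𝔸) (closedBall 0 r)
      ⟨Real.exp r - 1, sub_nonneg.2 (Real.one_le_exp hr)⟩ := fun _ hx _ hy =>
  norm_exp_sub_exp_sub_sub_le (mem_closedBall_zero_iff.1 hx) (mem_closedBall_zero_iff.1 hy)

theorem surjOn_exp_closedBall {r : ℝ} (hr : 0 ≤ r) :
    SurjOn (exp : 𝔸 → 𝔸) (closedBall 0 r) (closedBall 1 ((2 - Real.exp r) * r)) := by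
  let idInverse : (ContinuousLinearMap.id ℝ 𝔸).NonlinearRightInverse :=
    { toFun := id, nnnorm := 1, bound' := fun y => by simp, right_inv' := fun y => rfl }
  have h := (approximatesLinearOn_exp hr).surjOn_closedBall_of_nonlinearRightInverse idInverse hr
    subset_rfl
  change SurjOn exp _ (closedBall (exp 0) (((1 : ℝ)⁻¹ - (Real.exp r - 1)) * r)) at h
  rwa [exp_zero, inv_one, show 1 - (Real.exp r - 1) = 2 - Real.exp r by ring] at h

end BanachAlgebra

theorem Matrix.exp_mul_exp_neg {n 𝔸 : Type*} [Fintype n] [DecidableEq n] [NormedRing 𝔸]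
    [NormedAlgebra ℚ 𝔸] [CompleteSpace 𝔸] (A : Matrix n n 𝔸) : exp A * exp (-A) = 1 := by
  rw [← Matrix.exp_add_of_commute _ _ ((Commute.refl A).neg_right), add_neg_cancel, exp_zero]

/-- **Splitting off a small perturbation of the exponential (the computation
`e^{L+F} = e^L e^{f₊}` with `|f₊| ≤ 2|F|` in the KAM step of Ge–You–Zhao)**:
if `‖L‖ ≤ 1/8` and `‖F‖ ≤ 1/8` in the operator norm, then there is a matrix `G` with
`exp(L + F) = exp(L)·exp(G)` and `‖G‖ ≤ 2‖F‖`. -/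
theorem exp_perturbation_split
    (m : ℕ) (hm : 1 ≤ m) (L F : Matrix (Fin m) (Fin m) ℂ)
    (hL : ‖L‖ ≤ 1 / 8) (hF : ‖F‖ ≤ 1 / 8) :
    ∃ G : Matrix (Fin m) (Fin m) ℂ,
      NormedSpace.exp (L + F) = NormedSpace.exp L * NormedSpace.exp G ∧
      ‖G‖ ≤ 2 * ‖F‖ := by
  have : Nonempty (Fin m) := ⟨⟨0, hm⟩⟩
  have hdiff := norm_exp_sub_exp_le (a := 1 / 4) (b := 1 / 8) (x := L + F) (y := L)
    ((norm_add_le L F).trans (by linarith)) hL (by norm_num)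
  have hmem : exp (-L) * exp (L + F) ∈ closedBall 1 ((2 - Real.exp (2 * ‖F‖)) * (2 * ‖F‖)) := by
    have hexp_le : Real.exp (2 * ‖F‖) ≤ Real.exp (1 / 4) := Real.exp_le_exp.2 (by linarith)
    rw [mem_closedBall, dist_eq_norm]
    calc ‖exp (-L) * exp (L + F) - 1‖ = ‖exp (-L) * (exp (L + F) - exp L)‖ := by
          rw [mul_sub, show exp (-L) * exp L = 1 by simpa using Matrix.exp_mul_exp_neg (-L)]
      _ ≤ Real.exp (1 / 8) * ((Real.exp (1 / 4) - Real.exp (1 / 8)) / (1 / 4 - 1 / 8) * ‖F‖) := by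
          refine (norm_mul_le _ _).trans (mul_le_mul ?_ ?_ (norm_nonneg _) (by positivity))
          · exact (norm_exp_le _).trans (Real.exp_le_exp.2 (by simpa using hL))
          · simpa using hdiff
      _ ≤ 2 * (2 - Real.exp (1 / 4)) * ‖F‖ := by
          rw [← mul_assoc]
          exact mul_le_mul_of_nonneg_right Real.exp_one_div_eight_mul_slope_le (norm_nonneg F)
      _ ≤ (2 - Real.exp (2 * ‖F‖)) * (2 * ‖F‖) := by nlinarith [norm_nonneg F]
  obtain ⟨G, hG, hGexp⟩ := surjOn_exp_closedBall (by positivity) hmem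
  refine ⟨G, ?_, mem_closedBall_zero_iff.1 hG⟩
  rw [hGexp, ← mul_assoc, Matrix.exp_mul_exp_neg, one_mul]
end
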